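/- The Cartesian product X₁ × X₂ of two orthomodular lattices, with componentwise order and orthocomplement, is a biproduct in OMLatGal: the maps (κ₁)_*(x) = (x^⊥, 1), (κ₁)^*(x,y) = x^⊥ are a well-defined Galois connection, κ₁ is a dagger mono, and for Galois connections f_i : X_i → Y the cotuple [f₁,f₂]_*(x₁,x₂) = (f₁)_*(x₁) ∧ (f₂)_*(x₂), [f₁,f₂]^*(y) = (f₁^*(y), f₂^*(y)) is the unique morphism with [f₁,f₂] ∘ κ_i = f_i. -/
import Mathlib


class Ortholattice (α : Type*) extends Lattice α, BoundedOrder α where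
  ocompl : α → α
  ocompl_ocompl : ∀ x : α, ocompl (ocompl x) = x
  ocompl_antitone : ∀ x y : α, x ≤ y → ocompl y ≤ ocompl x
  inf_ocompl : ∀ x : α, x ⊓ ocompl x = ⊥

postfix:max "ᗮ" => Ortholattice.ocompl

class OrthomodularLattice (α : Type*) extends Ortholattice α where
  orthomodular : ∀ x y : α, x ≤ y → y = x ⊔ (xᗮ ⊓ y)

lemma ortho_compl_le_iff {α : Type*} [Ortholattice α] (x y : α) :
    x ≤ yᗮ ↔ y ≤ xᗮ := by
  constructor
  · intro h
    have := Ortholattice.ocompl_antitone _ _ h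
    rwa [Ortholattice.ocompl_ocompl] at this
  · intro h
    have := Ortholattice.ocompl_antitone _ _ h
    rwa [Ortholattice.ocompl_ocompl] at this

lemma ortho_top_compl {α : Type*} [Ortholattice α] : (⊤ : α)ᗮ = ⊥ := by
  have h := Ortholattice.inf_ocompl (⊤ : α)
  rwa [top_inf_eq] at h

/-- The Cartesian product X₁ × X₂ (componentwise order, componentwise
orthocomplement) is a biproduct in OMLatGal: κ₁ given by (κ₁)_*(x) = (xᗮ, 1),
(κ₁)^*(x,y) = xᗮ is a Galois connection and a dagger mono, and for Galois
connections f_i : X_i → Y the cotuple [f₁,f₂]_*(x₁,x₂) = (f₁)_*(x₁) ⊓ (f₂)_*(x₂),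
[f₁,f₂]^*(y) = (f₁^*(y), f₂^*(y)) is the unique morphism with [f₁,f₂] ∘ κ_i = f_i. -/
theorem biproduct_OMLatGal (X₁ X₂ Y : Type*)
    [OrthomodularLattice X₁] [OrthomodularLattice X₂] [OrthomodularLattice Y]
    (f1s : X₁ → Y) (f1c : Y → X₁) (hf1 : ∀ (x : X₁) (y : Y), x ≤ f1c y ↔ y ≤ f1s x)
    (f2s : X₂ → Y) (f2c : Y → X₂) (hf2 : ∀ (x : X₂) (y : Y), x ≤ f2c y ↔ y ≤ f2s x) :
    -- κ₁ is a well-defined Galois connection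
    (∀ (z : X₁) (p : X₁ × X₂), z ≤ (p.1)ᗮ ↔ p ≤ ((zᗮ, ⊤) : X₁ × X₂)) ∧
    -- κ₁ is a dagger mono: κ₁^*((κ₁_* z)ᗮ) = zᗮ
    (∀ z : X₁, ((zᗮ)ᗮ)ᗮ = zᗮ) ∧
    -- the cotuple is a Galois connection
    (∀ (p : X₁ × X₂) (y : Y), p ≤ (f1c y, f2c y) ↔ y ≤ f1s p.1 ⊓ f2s p.2) ∧
    -- [f₁,f₂] ∘ κ₁ = f₁ and [f₁,f₂] ∘ κ₂ = f₂ (on both components)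
    (∀ x : X₁, f1s ((xᗮ)ᗮ) ⊓ f2s ((⊤ : X₂)ᗮ) = f1s x) ∧
    (∀ y : Y, (((f1c y, f2c y) : X₁ × X₂).1ᗮ)ᗮ = f1c y) ∧
    (∀ x : X₂, f1s ((⊤ : X₁)ᗮ) ⊓ f2s ((xᗮ)ᗮ) = f2s x) ∧
    (∀ y : Y, (((f1c y, f2c y) : X₁ × X₂).2ᗮ)ᗮ = f2c y) ∧
    -- uniqueness: any Galois connection g with g ∘ κ_i = f_i equals the cotuple
    (∀ (gs : X₁ × X₂ → Y) (gc : Y → X₁ × X₂),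
      (∀ (p : X₁ × X₂) (y : Y), p ≤ gc y ↔ y ≤ gs p) →
      (∀ x : X₁, gs ((xᗮ)ᗮ, (⊤ : X₂)ᗮ) = f1s x) →
      (∀ y : Y, (((gc y).1)ᗮ)ᗮ = f1c y) →
      (∀ x : X₂, gs ((⊤ : X₁)ᗮ, (xᗮ)ᗮ) = f2s x) →
      (∀ y : Y, (((gc y).2)ᗮ)ᗮ = f2c y) →
      (∀ p : X₁ × X₂, gs p = f1s p.1 ⊓ f2s p.2) ∧
      (∀ y : Y, gc y = (f1c y, f2c y))) := by
  have f2s_bot : f2s ⊥ = ⊤ := by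
    have : (⊤ : Y) ≤ f2s ⊥ := (hf2 ⊥ ⊤).mp bot_le
    exact le_antisymm le_top this
  have f1s_bot : f1s ⊥ = ⊤ := by
    have : (⊤ : Y) ≤ f1s ⊥ := (hf1 ⊥ ⊤).mp bot_le
    exact le_antisymm le_top this
  have cot : ∀ (p : X₁ × X₂) (y : Y), p ≤ (f1c y, f2c y) ↔ y ≤ f1s p.1 ⊓ f2s p.2 := by
    intro p y
    rw [Prod.le_def, le_inf_iff, ← hf1, ← hf2]
  refine ⟨?_, ?_, cot, ?_, ?_, ?_, ?_, ?_⟩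
  · intro z p
    rw [Prod.le_def]
    simp only [le_top, and_true]
    exact ortho_compl_le_iff z p.1
  · intro z; rw [Ortholattice.ocompl_ocompl]
  · intro x; rw [Ortholattice.ocompl_ocompl, ortho_top_compl, f2s_bot, inf_top_eq]
  · intro y; exact Ortholattice.ocompl_ocompl _
  · intro x; rw [Ortholattice.ocompl_ocompl, ortho_top_compl, f1s_bot, top_inf_eq]
  · intro y; exact Ortholattice.ocompl_ocompl _
  · intro gs gc hg h1 h2 h3 h4
    have hgc : ∀ y : Y, gc y = (f1c y, f2c y) := by
      intro y
      have e1 : (gc y).1 = f1c y := by rw [← h2 y, Ortholattice.ocompl_ocompl]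
      have e2 : (gc y).2 = f2c y := by rw [← h4 y, Ortholattice.ocompl_ocompl]
      exact Prod.ext e1 e2
    refine ⟨?_, hgc⟩
    intro p
    have key : ∀ y : Y, y ≤ gs p ↔ y ≤ f1s p.1 ⊓ f2s p.2 := by
      intro y
      rw [← hg, hgc, cot]
    exact le_antisymm ((key (gs p)).mp le_rfl) ((key _).mpr le_rfl)
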